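/- arXiv:2409.19874 — 2 statements merged into one kernel-verified Lean document; each statement's English description precedes it below -/
import Mathlib

section
/- Let Q be a stochastic kernel satisfying the drift condition QV ≤ λV + β with V : X → [1,∞), and let d ≥ 1, γ := λ + 2β/d, C := {x : V(x) ≤ d}. Let ((X_t, X'_t)) be a Markov chain with kernel Q̂ (a Markov coupling of Q) started from μ × μ', and let N_t := Σ_{j=0}^t 1{(X_j,X'_j) ∈ C×C}. Then for all t ∈ ℕ and j ≤ t: P{N_t < j} ≤ γ^t · d^{j−1} · H(μ,μ'), where H(μ,μ') = (∫V dμ + ∫V dμ')/2. -/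
open MeasureTheory ProbabilityTheory

/-- number of visits to the small set up to time `n - 1` -/
noncomputable def Nvis {X Ω : Type*} (V : X → ℝ) (d : ℝ) (Z : ℕ → Ω → X × X) (n : ℕ) (ω : Ω) : ℕ :=
  ∑ s ∈ Finset.range n, if V (Z s ω).1 ≤ d ∧ V (Z s ω).2 ≤ d then 1 else 0

/-- discount factor -/
noncomputable def Dw {X Ω : Type*} (V : X → ℝ) (d : ℝ) (Z : ℕ → Ω → X × X) (n : ℕ) (ω : Ω) : ℝ :=
  d⁻¹ ^ Nvis V d Z n ω

lemma kernel_drift_int {X : Type*} [MeasurableSpace X] (Q : Kernel X X) [IsMarkovKernel Q]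
    (V : X → ℝ) (hVmeas : Measurable V) (hV1 : ∀ x, 1 ≤ V x)
    (lam beta : ℝ) (hlam : 0 ≤ lam) (hbeta : 0 ≤ beta)
    (hdrift : ∀ x, ∫⁻ y, ENNReal.ofReal (V y) ∂(Q x) ≤ ENNReal.ofReal (lam * V x + beta))
    (x : X) :
    Integrable V (Q x) ∧ ∫ y, V y ∂(Q x) ≤ lam * V x + beta := by
  have hnn : ∀ y, 0 ≤ V y := fun y => le_trans zero_le_one (hV1 y)
  have hfin : ∫⁻ y, ENNReal.ofReal (V y) ∂(Q x) < ⊤ :=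
    lt_of_le_of_lt (hdrift x) ENNReal.ofReal_lt_top
  have hi : Integrable V (Q x) := by
    refine ⟨hVmeas.aestronglyMeasurable, ?_⟩
    rw [hasFiniteIntegral_iff_ofReal (Filter.Eventually.of_forall hnn)]
    exact hfin
  refine ⟨hi, ?_⟩
  have h0 : 0 ≤ lam * V x + beta := add_nonneg (mul_nonneg hlam (hnn x)) hbeta
  rw [integral_eq_lintegral_of_nonneg_ae (Filter.Eventually.of_forall hnn)
      hVmeas.aestronglyMeasurable]
  calc (∫⁻ y, ENNReal.ofReal (V y) ∂(Q x)).toReal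
      ≤ (ENNReal.ofReal (lam * V x + beta)).toReal :=
        ENNReal.toReal_mono ENNReal.ofReal_ne_top (hdrift x)
    _ = lam * V x + beta := ENNReal.toReal_ofReal h0

lemma coupled_drift {X : Type*} [MeasurableSpace X]
    (Qhat : Kernel (X × X) (X × X)) [IsMarkovKernel Qhat]
    (Q : Kernel X X) [IsMarkovKernel Q]
    (hcpl : ∀ p : X × X,
      (Qhat p).map Prod.fst = Q p.1 ∧ (Qhat p).map Prod.snd = Q p.2)
    (V : X → ℝ) (hVmeas : Measurable V)
    (hiQ : ∀ x, Integrable V (Q x))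
    (z : X × X) :
    Integrable (fun p => (V p.1 + V p.2) / 2) (Qhat z) ∧
    ∫ p, (V p.1 + V p.2) / 2 ∂(Qhat z)
      = (∫ y, V y ∂(Q z.1) + ∫ y, V y ∂(Q z.2)) / 2 := by
  have h1 : Integrable (fun p : X × X => V p.1) (Qhat z) := by
    have := (hiQ z.1)
    rw [← (hcpl z).1] at this
    exact (integrable_map_measure hVmeas.aestronglyMeasurable
      measurable_fst.aemeasurable).mp this
  have h2 : Integrable (fun p : X × X => V p.2) (Qhat z) := by
    have := (hiQ z.2)
    rw [← (hcpl z).2] at this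
    exact (integrable_map_measure hVmeas.aestronglyMeasurable
      measurable_snd.aemeasurable).mp this
  refine ⟨(h1.add h2).div_const 2, ?_⟩
  have e1 : ∫ p, V p.1 ∂(Qhat z) = ∫ y, V y ∂(Q z.1) := by
    rw [← (hcpl z).1, integral_map measurable_fst.aemeasurable hVmeas.aestronglyMeasurable]
  have e2 : ∫ p, V p.2 ∂(Qhat z) = ∫ y, V y ∂(Q z.2) := by
    rw [← (hcpl z).2, integral_map measurable_snd.aemeasurable hVmeas.aestronglyMeasurable]
  rw [integral_div, integral_add h1 h2, e1, e2]

theorem visits_to_small_set_bound {X : Type*} [MeasurableSpace X]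
    {Ω : Type*} {m0 : MeasurableSpace Ω}
    (P : Measure Ω) [IsProbabilityMeasure P] (F : Filtration ℕ m0)
    (Q : Kernel X X) [IsMarkovKernel Q]
    (Qhat : Kernel (X × X) (X × X)) [IsMarkovKernel Qhat]
    (hcpl : ∀ p : X × X,
      (Qhat p).map Prod.fst = Q p.1 ∧ (Qhat p).map Prod.snd = Q p.2)
    (V : X → ℝ) (hVmeas : Measurable V) (hV1 : ∀ x, 1 ≤ V x)
    (lam beta : ℝ) (hlam : 0 ≤ lam) (hbeta : 0 ≤ beta)
    (hdrift : ∀ x, ∫⁻ y, ENNReal.ofReal (V y) ∂(Q x) ≤ ENNReal.ofReal (lam * V x + beta))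
    (d : ℝ) (hd : 1 ≤ d)
    (μ μ' : Measure X) [IsProbabilityMeasure μ] [IsProbabilityMeasure μ']
    (hVμ : Integrable V μ) (hVμ' : Integrable V μ')
    -- the coupled chain
    (Z : ℕ → Ω → X × X)
    (hadapt : ∀ t, Measurable[F t] (Z t))
    (hinit : Measure.map (Z 0) P = μ.prod μ')
    (hint : ∀ t, Integrable (fun ω => (V (Z t ω).1 + V (Z t ω).2) / 2) P)
    (hmarkov : ∀ t, P[fun ω => (V (Z (t + 1) ω).1 + V (Z (t + 1) ω).2) / 2|F t]
      =ᵐ[P] fun ω => ∫ p, (V p.1 + V p.2) / 2 ∂(Qhat (Z t ω)))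
    (t j : ℕ) (hj : j ≤ t) :
    P {ω | (∑ s ∈ Finset.range (t + 1),
        if V (Z s ω).1 ≤ d ∧ V (Z s ω).2 ≤ d then 1 else 0) < j}
      ≤ ENNReal.ofReal ((lam + 2 * beta / d) ^ t * d ^ (j - 1) *
        ((∫ x, V x ∂μ + ∫ x, V x ∂μ') / 2)) := by
  have hd0 : (0:ℝ) < d := lt_of_lt_of_le one_pos hd
  have hinv1 : d⁻¹ ≤ 1 := inv_le_one_of_one_le₀ hd
  have hinv0 : (0:ℝ) ≤ d⁻¹ := inv_nonneg.mpr hd0.le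
  set γ : ℝ := lam + 2 * beta / d with hγ
  have hγ0 : 0 ≤ γ := by positivity
  set H : ℝ := (∫ x, V x ∂μ + ∫ x, V x ∂μ') / 2 with hH
  have hnn : ∀ x, 0 ≤ V x := fun x => le_trans zero_le_one (hV1 x)
  have hQ := fun x => kernel_drift_int Q V hVmeas hV1 lam beta hlam hbeta hdrift x
  have hQhat : ∀ z : X × X,
      ∫ p, (V p.1 + V p.2) / 2 ∂(Qhat z) ≤ lam * ((V z.1 + V z.2) / 2) + beta := by
    intro z
    rw [(coupled_drift Qhat Q hcpl V hVmeas (fun x => (hQ x).1) z).2]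
    have b1 := (hQ z.1).2
    have b2 := (hQ z.2).2
    linarith
  -- measurability
  have hZm : ∀ s, Measurable (Z s) := fun s => (hadapt s).mono (F.le s) le_rfl
  have hSmeas : MeasurableSet {p : X × X | V p.1 ≤ d ∧ V p.2 ≤ d} :=
    (measurableSet_le (hVmeas.comp measurable_fst) measurable_const).inter
      (measurableSet_le (hVmeas.comp measurable_snd) measurable_const)
  have hNm : ∀ {m : MeasurableSpace Ω} (n : ℕ), (∀ s, s < n → Measurable[m] (Z s)) →
      Measurable[m] (Nvis V d Z n) := by
    intro m n hZ
    apply Finset.measurable_sum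
    intro s hs
    exact Measurable.ite ((hZ s (Finset.mem_range.mp hs)) hSmeas)
      measurable_const measurable_const
  have hDm : ∀ {m : MeasurableSpace Ω} (n : ℕ), (∀ s, s < n → Measurable[m] (Z s)) →
      Measurable[m] (Dw V d Z n) := fun n hZ => measurable_from_nat.comp (hNm n hZ)
  have hDm0 : ∀ n, Measurable (Dw V d Z n) := fun n => hDm n (fun s _ => hZm s)
  have hDnonneg : ∀ n ω, 0 ≤ Dw V d Z n ω := fun n ω => pow_nonneg hinv0 _
  have hDle1 : ∀ n ω, Dw V d Z n ω ≤ 1 := fun n ω => pow_le_one₀ hinv0 hinv1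
  have hDbd : ∀ n, ∃ C, ∀ ω, ‖Dw V d Z n ω‖ ≤ C := by
    intro n
    exact ⟨1, fun ω => by
      rw [Real.norm_eq_abs, abs_of_nonneg (hDnonneg n ω)]; exact hDle1 n ω⟩
  have hIDW : ∀ n s, Integrable
      (fun ω => Dw V d Z n ω * ((V (Z s ω).1 + V (Z s ω).2) / 2)) P :=
    fun n s => (hint s).bdd_mul (hDm0 n).aestronglyMeasurable (Filter.Eventually.of_forall (hDbd n).choose_spec)
  have hW1 : ∀ s ω, 1 ≤ (V (Z s ω).1 + V (Z s ω).2) / 2 := by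
    intro s ω
    have := hV1 (Z s ω).1; have := hV1 (Z s ω).2; linarith
  -- the supermartingale bound by induction
  have key : ∀ n, ∫ ω, Dw V d Z n ω * ((V (Z n ω).1 + V (Z n ω).2) / 2) ∂P ≤ γ ^ n * H := by
    intro n
    induction n with
    | zero =>
      have hDw0 : ∀ ω : Ω, Dw V d Z 0 ω = 1 := by
        intro ω; simp [Dw, Nvis]
      simp only [hDw0, one_mul, pow_zero]
      have hfm : AEStronglyMeasurable (fun p : X × X => (V p.1 + V p.2) / 2)
          (Measure.map (Z 0) P) :=
        (((hVmeas.comp measurable_fst).add (hVmeas.comp measurable_snd)).div_const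
          2).aestronglyMeasurable
      have e0 : ∫ ω, (V (Z 0 ω).1 + V (Z 0 ω).2) / 2 ∂P
          = ∫ p : X × X, (V p.1 + V p.2) / 2 ∂(μ.prod μ') := by
        rw [← hinit, integral_map (hZm 0).aemeasurable hfm]
      rw [e0]
      have i1 : Integrable (fun p : X × X => V p.1) (μ.prod μ') := by
        have h : Integrable V ((μ.prod μ').map Prod.fst) := by
          rw [Measure.map_fst_prod]; simpa [measure_univ] using hVμ
        exact (integrable_map_measure hVmeas.aestronglyMeasurable
          measurable_fst.aemeasurable).mp h
      have i2 : Integrable (fun p : X × X => V p.2) (μ.prod μ') := by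
        have h : Integrable V ((μ.prod μ').map Prod.snd) := by
          rw [Measure.map_snd_prod]; simpa [measure_univ] using hVμ'
        exact (integrable_map_measure hVmeas.aestronglyMeasurable
          measurable_snd.aemeasurable).mp h
      have j1 : ∫ p : X × X, V p.1 ∂(μ.prod μ') = ∫ x, V x ∂μ := by
        rw [← integral_map measurable_fst.aemeasurable hVmeas.aestronglyMeasurable,
          Measure.map_fst_prod, measure_univ, one_smul]
      have j2 : ∫ p : X × X, V p.2 ∂(μ.prod μ') = ∫ x, V x ∂μ' := by
        rw [← integral_map measurable_snd.aemeasurable hVmeas.aestronglyMeasurable,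
          Measure.map_snd_prod, measure_univ, one_smul]
      rw [integral_div, integral_add i1 i2, j1, j2]
    | succ n ih =>
      have hg : True := trivial
      have hDmF : Measurable[F n] (Dw V d Z (n + 1)) := by
        apply hDm
        intro s hs
        exact (hadapt s).mono (F.mono (Nat.lt_succ_iff.mp hs)) le_rfl
      have hIfg : Integrable (Dw V d Z (n + 1) * fun ω => (V (Z (n + 1) ω).1 + V (Z (n + 1) ω).2) / 2) P := hIDW (n + 1) (n + 1)
      have hpull := condExp_mul_of_stronglyMeasurable_left (μ := P) hDmF.stronglyMeasurable
        hIfg (hint (n + 1))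
      have hstep1 : ∫ ω, Dw V d Z (n + 1) ω * ((V (Z (n + 1) ω).1 + V (Z (n + 1) ω).2) / 2) ∂P
          = ∫ ω, Dw V d Z (n + 1) ω * (P[fun ω => (V (Z (n + 1) ω).1 + V (Z (n + 1) ω).2) / 2|F n]) ω ∂P := by
        calc ∫ ω, Dw V d Z (n + 1) ω * ((V (Z (n + 1) ω).1 + V (Z (n + 1) ω).2) / 2) ∂P
            = ∫ ω, (P[Dw V d Z (n + 1) * fun ω => (V (Z (n + 1) ω).1 + V (Z (n + 1) ω).2) / 2|F n]) ω ∂P := (integral_condExp (F.le n)).symm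
          _ = ∫ ω, Dw V d Z (n + 1) ω * (P[fun ω => (V (Z (n + 1) ω).1 + V (Z (n + 1) ω).2) / 2|F n]) ω ∂P := integral_congr_ae hpull
      -- pointwise bound
      have hkey : ∀ ω, Dw V d Z (n + 1) ω * (∫ p, (V p.1 + V p.2) / 2 ∂(Qhat (Z n ω)))
          ≤ γ * (Dw V d Z n ω * ((V (Z n ω).1 + V (Z n ω).2) / 2)) := by
        intro ω
        have hI := hQhat (Z n ω)
        set w : ℝ := (V (Z n ω).1 + V (Z n ω).2) / 2 with hw
        have hw1 : 1 ≤ w := hW1 n ω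
        have hD0 : 0 ≤ Dw V d Z n ω := hDnonneg n ω
        have hDsucc : Dw V d Z (n + 1) ω = Dw V d Z n ω *
            d⁻¹ ^ (if V (Z n ω).1 ≤ d ∧ V (Z n ω).2 ≤ d then 1 else 0) := by
          simp only [Dw, Nvis, Finset.sum_range_succ, pow_add]
        rw [hDsucc]
        by_cases hcase : V (Z n ω).1 ≤ d ∧ V (Z n ω).2 ≤ d
        · rw [if_pos hcase, pow_one]
          have h2 : d⁻¹ * (lam * w + beta) ≤ γ * w := by
            have h3 : d⁻¹ * (lam * w) ≤ lam * w :=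
              mul_le_of_le_one_left (mul_nonneg hlam (by linarith)) hinv1
            have h4 : d⁻¹ * beta ≤ 2 * beta / d * w := by
              rw [inv_mul_eq_div, div_mul_eq_mul_div, div_le_div_iff₀ hd0 hd0]
              nlinarith [mul_nonneg (mul_nonneg hbeta hd0.le)
                (by linarith : (0:ℝ) ≤ 2 * w - 1)]
            have h5 : γ * w = lam * w + 2 * beta / d * w := by rw [hγ]; ring
            have h6 : d⁻¹ * (lam * w + beta) = d⁻¹ * (lam * w) + d⁻¹ * beta := by ring
            rw [h5, h6]
            linarith
          calc Dw V d Z n ω * d⁻¹ * (∫ p, (V p.1 + V p.2) / 2 ∂(Qhat (Z n ω)))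
              ≤ Dw V d Z n ω * d⁻¹ * (lam * w + beta) :=
                mul_le_mul_of_nonneg_left hI (by positivity)
            _ = Dw V d Z n ω * (d⁻¹ * (lam * w + beta)) := by ring
            _ ≤ Dw V d Z n ω * (γ * w) := mul_le_mul_of_nonneg_left h2 hD0
            _ = γ * (Dw V d Z n ω * w) := by ring
        · rw [if_neg hcase, pow_zero, mul_one]
          have hsum : d < 2 * w := by
            rw [hw]
            rcases le_or_gt (V (Z n ω).1) d with h | h
            · have h2 : d < V (Z n ω).2 := by
                by_contra h2
                exact hcase ⟨h, le_of_not_gt h2⟩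
              have := hV1 (Z n ω).1; linarith
            · have := hV1 (Z n ω).2; linarith
          have h2 : lam * w + beta ≤ γ * w := by
            have hb : beta ≤ 2 * beta / d * w := by
              rw [div_mul_eq_mul_div, le_div_iff₀ hd0]
              nlinarith
            have h5 : γ * w = lam * w + 2 * beta / d * w := by rw [hγ]; ring
            rw [h5]
            linarith
          calc Dw V d Z n ω * (∫ p, (V p.1 + V p.2) / 2 ∂(Qhat (Z n ω)))
              ≤ Dw V d Z n ω * (lam * w + beta) := mul_le_mul_of_nonneg_left hI hD0
            _ ≤ Dw V d Z n ω * (γ * w) := mul_le_mul_of_nonneg_left h2 hD0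
            _ = γ * (Dw V d Z n ω * w) := by ring
      have hbound : (fun ω => Dw V d Z (n + 1) ω * (P[fun ω => (V (Z (n + 1) ω).1 + V (Z (n + 1) ω).2) / 2|F n]) ω)
          ≤ᵐ[P] fun ω => γ * (Dw V d Z n ω * ((V (Z n ω).1 + V (Z n ω).2) / 2)) := by
        filter_upwards [hmarkov n] with ω hω
        calc Dw V d Z (n + 1) ω * (P[fun ω => (V (Z (n + 1) ω).1 + V (Z (n + 1) ω).2) / 2|F n]) ω
            = Dw V d Z (n + 1) ω * (∫ p, (V p.1 + V p.2) / 2 ∂(Qhat (Z n ω))) := by rw [hω]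
          _ ≤ γ * (Dw V d Z n ω * ((V (Z n ω).1 + V (Z n ω).2) / 2)) := hkey ω
      have hILHS : Integrable (fun ω => Dw V d Z (n + 1) ω * (P[fun ω => (V (Z (n + 1) ω).1 + V (Z (n + 1) ω).2) / 2|F n]) ω) P :=
        integrable_condExp.bdd_mul (hDm0 (n + 1)).aestronglyMeasurable (Filter.Eventually.of_forall (hDbd (n + 1)).choose_spec)
      have hIRHS : Integrable
          (fun ω => γ * (Dw V d Z n ω * ((V (Z n ω).1 + V (Z n ω).2) / 2))) P :=
        (hIDW n n).const_mul γ
      calc ∫ ω, Dw V d Z (n + 1) ω * ((V (Z (n + 1) ω).1 + V (Z (n + 1) ω).2) / 2) ∂P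
          = ∫ ω, Dw V d Z (n + 1) ω * (P[fun ω => (V (Z (n + 1) ω).1 + V (Z (n + 1) ω).2) / 2|F n]) ω ∂P := hstep1
        _ ≤ ∫ ω, γ * (Dw V d Z n ω * ((V (Z n ω).1 + V (Z n ω).2) / 2)) ∂P :=
            integral_mono_ae hILHS hIRHS hbound
        _ = γ * ∫ ω, Dw V d Z n ω * ((V (Z n ω).1 + V (Z n ω).2) / 2) ∂P :=
            integral_const_mul γ _
        _ ≤ γ * (γ ^ n * H) := mul_le_mul_of_nonneg_left ih hγ0
        _ = γ ^ (n + 1) * H := by rw [pow_succ]; ring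
  -- conclude
  rcases Nat.eq_zero_or_pos j with rfl | hj1
  · have hempty : {ω | (∑ s ∈ Finset.range (t + 1),
        if V (Z s ω).1 ≤ d ∧ V (Z s ω).2 ≤ d then 1 else 0) < 0} = (∅ : Set Ω) := by
      ext ω; simp
    rw [hempty]
    simp
  obtain ⟨k, rfl⟩ : ∃ k, j = k + 1 := ⟨j - 1, (Nat.succ_pred_eq_of_pos hj1).symm⟩
  set A : Set Ω := {ω | Nvis V d Z (t + 1) ω < k + 1} with hA
  have hgoal : {ω | (∑ s ∈ Finset.range (t + 1),
      if V (Z s ω).1 ≤ d ∧ V (Z s ω).2 ≤ d then 1 else 0) < k + 1} = A := rfl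
  rw [hgoal]
  have hAmeas : MeasurableSet A := by
    have hrepr : A = (Nvis V d Z (t + 1)) ⁻¹' (Set.Iio (k + 1)) := rfl
    rw [hrepr]
    exact (hNm (t + 1) (fun s _ => hZm s)) measurableSet_Iio
  have hDA : ∀ ω ∈ A, d⁻¹ ^ k ≤ Dw V d Z t ω * ((V (Z t ω).1 + V (Z t ω).2) / 2) := by
    intro ω hω
    have hle : Nvis V d Z t ω ≤ k := by
      have h1 : Nvis V d Z t ω ≤ Nvis V d Z (t + 1) ω := by
        apply Finset.sum_le_sum_of_subset
        exact Finset.range_subset_range.mpr (Nat.le_succ t)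
      have h2 : Nvis V d Z (t + 1) ω < k + 1 := hω
      omega
    have h3 : d⁻¹ ^ k ≤ Dw V d Z t ω := pow_le_pow_of_le_one hinv0 hinv1 hle
    calc d⁻¹ ^ k ≤ Dw V d Z t ω := h3
      _ ≤ Dw V d Z t ω * ((V (Z t ω).1 + V (Z t ω).2) / 2) :=
          le_mul_of_one_le_right (hDnonneg t ω) (hW1 t ω)
  have h1 : d⁻¹ ^ k * (P A).toReal
      ≤ ∫ ω in A, Dw V d Z t ω * ((V (Z t ω).1 + V (Z t ω).2) / 2) ∂P := by
    have h := setIntegral_mono_on (μ := P) (s := A)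
      (f := fun _ => d⁻¹ ^ k)
      (g := fun ω => Dw V d Z t ω * ((V (Z t ω).1 + V (Z t ω).2) / 2))
      ((integrableOn_const_iff).mpr (Or.inr (measure_lt_top P A)))
      ((hIDW t t).integrableOn) hAmeas hDA
    rw [setIntegral_const, smul_eq_mul] at h
    calc d⁻¹ ^ k * (P A).toReal = (P A).toReal * d⁻¹ ^ k := mul_comm _ _
      _ ≤ _ := h
  have h2 : ∫ ω in A, Dw V d Z t ω * ((V (Z t ω).1 + V (Z t ω).2) / 2) ∂P
      ≤ ∫ ω, Dw V d Z t ω * ((V (Z t ω).1 + V (Z t ω).2) / 2) ∂P := by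
    apply setIntegral_le_integral (hIDW t t)
    filter_upwards with ω
    exact mul_nonneg (hDnonneg t ω) (by linarith [hW1 t ω])
  have h3 : d⁻¹ ^ k * (P A).toReal ≤ γ ^ t * H := le_trans h1 (le_trans h2 (key t))
  have h4 : (P A).toReal ≤ γ ^ t * d ^ k * H := by
    have hdk : (0:ℝ) < d ^ k := pow_pos hd0 k
    have he : (P A).toReal = d⁻¹ ^ k * (P A).toReal * d ^ k := by
      rw [mul_comm (d⁻¹ ^ k), mul_assoc, ← mul_pow]
      field_simp
      simp
    rw [he]
    calc d⁻¹ ^ k * (P A).toReal * d ^ k ≤ γ ^ t * H * d ^ k :=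
        mul_le_mul_of_nonneg_right h3 hdk.le
      _ = γ ^ t * d ^ k * H := by ring
  calc P A = ENNReal.ofReal (P A).toReal := (ENNReal.ofReal_toReal (measure_ne_top P A)).symm
    _ ≤ ENNReal.ofReal (γ ^ t * d ^ (k + 1 - 1) * H) := by
        apply ENNReal.ofReal_le_ofReal
        simpa using h4
end

section
/- (Main theorem) Let X be a Polish space with closed partial order ⪯, Q an increasing stochastic kernel satisfying QV ≤ λV + β for measurable V : X → [1,∞) and constants λ, β ≥ 0. Fix d ≥ 1, set γ = λ + 2β/d, C = {V ≤ d}, and ε = inf{α(Q_x, Q_{x'}) : (x,x') ∈ C×C}. Then for any probability measures μ, μ' on X and any j ≤ t in ℕ: κ(μQ^t, μ'Q^t) ≤ (1−ε)^j + γ^t d^{j−1} H(μ,μ'), where κ is the Kolmogorov distance κ(ρ,ρ') = sup{|∫h dρ − ∫h dρ'| : h bounded measurable increasing, 0 ≤ h ≤ 1} and H(μ,μ') = (∫V dμ + ∫V dμ')/2. -/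
open MeasureTheory ProbabilityTheory

/-- `ρ` is a coupling of `μ` and `ν`. -/
def IsCoupling {X : Type*} [MeasurableSpace X]
    (ρ : Measure (X × X)) (μ ν : Measure X) : Prop :=
  ρ.map Prod.fst = μ ∧ ρ.map Prod.snd = ν

/-- `α(μ, ν)`: the supremum, over couplings `ρ` of `(μ, ν)`, of the mass assigned by
`ρ` to the set `{(x, x') : x' ⪯ x}`. -/
noncomputable def alphaRev {X : Type*} [MeasurableSpace X] [Preorder X]
    (μ ν : Measure X) : ENNReal :=
  ⨆ ρ ∈ {ρ : Measure (X × X) | IsCoupling ρ μ ν}, ρ {p : X × X | p.2 ≤ p.1}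

/-- Kolmogorov distance: the supremum of `|∫ h dρ − ∫ h dρ'|` over bounded measurable
increasing `h` with `0 ≤ h ≤ 1`. -/
noncomputable def kolDist {X : Type*} [MeasurableSpace X] [Preorder X]
    (ρ ρ' : Measure X) : ℝ :=
  sSup {r : ℝ | ∃ h : X → ℝ, Measurable h ∧ Monotone h ∧ (∀ x, 0 ≤ h x ∧ h x ≤ 1) ∧
    r = |∫ x, h x ∂ρ - ∫ x, h x ∂ρ'|}

/-- The distribution after `t` steps of the kernel `Q` starting from `μ`, i.e. `μ Q^t`. -/
noncomputable def iterDist {X : Type*} [MeasurableSpace X]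
    (Q : Kernel X X) (μ : Measure X) : ℕ → Measure X
  | 0 => μ
  | t + 1 => (iterDist Q μ t).bind (fun x => Q x)

section Aux

variable {X : Type*} [MeasurableSpace X]

lemma aux_bddInt {g : X → ℝ} (ν : Measure X) [IsFiniteMeasure ν]
    (hg : Measurable g) (hb : ∀ x, 0 ≤ g x ∧ g x ≤ 1) : Integrable g ν :=
  (integrable_const (1:ℝ)).mono' hg.aestronglyMeasurable
    (Filter.Eventually.of_forall fun x => by
      rw [Real.norm_eq_abs, abs_le]; exact ⟨by linarith [(hb x).1], (hb x).2⟩)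

lemma aux_A_meas (Q : Kernel X X) [IsSFiniteKernel Q] {g : X → ℝ}
    (hg : Measurable g) (hb : ∀ x, 0 ≤ g x ∧ g x ≤ 1) :
    Measurable (fun x => ∫ y, g y ∂(Q x)) := by
  have heq : (fun x => ∫ y, g y ∂(Q x))
      = fun x => (∫⁻ y, ENNReal.ofReal (g y) ∂(Q x)).toReal := by
    funext x
    exact integral_eq_lintegral_of_nonneg_ae
      (Filter.Eventually.of_forall fun y => (hb y).1) hg.aestronglyMeasurable
  rw [heq]
  exact (Measurable.lintegral_kernel_prod_right'
    (f := fun p : X × X => ENNReal.ofReal (g p.2))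
    (ENNReal.measurable_ofReal.comp (hg.comp measurable_snd))).ennreal_toReal

lemma aux_A_bd (Q : Kernel X X) [IsMarkovKernel Q] {g : X → ℝ}
    (hg : Measurable g) (hb : ∀ x, 0 ≤ g x ∧ g x ≤ 1) (x : X) :
    0 ≤ ∫ y, g y ∂(Q x) ∧ ∫ y, g y ∂(Q x) ≤ 1 := by
  constructor
  · exact integral_nonneg fun y => (hb y).1
  · calc ∫ y, g y ∂(Q x) ≤ ∫ _, (1:ℝ) ∂(Q x) :=
          integral_mono (aux_bddInt _ hg hb) (integrable_const 1) fun y => (hb y).2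
    _ = 1 := by simp

lemma aux_bind_prob (Q : Kernel X X) [IsMarkovKernel Q] (ν : Measure X)
    [IsProbabilityMeasure ν] : IsProbabilityMeasure (ν.bind (fun x => Q x)) := by
  constructor
  rw [Measure.bind_apply MeasurableSet.univ (Kernel.measurable Q).aemeasurable]
  simp

lemma aux_iterDist_prob (Q : Kernel X X) [IsMarkovKernel Q] (ν : Measure X)
    [IsProbabilityMeasure ν] (t : ℕ) : IsProbabilityMeasure (iterDist Q ν t) := by
  induction t with
  | zero => simpa [iterDist]
  | succ n ih => exact @aux_bind_prob _ _ Q _ _ ih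

lemma aux_integral_bind (Q : Kernel X X) [IsMarkovKernel Q] (ν : Measure X)
    [IsProbabilityMeasure ν] {g : X → ℝ} (hg : Measurable g)
    (hb : ∀ x, 0 ≤ g x ∧ g x ≤ 1) :
    ∫ y, g y ∂(ν.bind (fun x => Q x)) = ∫ x, (∫ y, g y ∂(Q x)) ∂ν := by
  haveI : IsProbabilityMeasure (ν.bind (fun x => Q x)) := aux_bind_prob Q ν
  rw [integral_eq_lintegral_of_nonneg_ae
      (Filter.Eventually.of_forall fun y => (hb y).1) hg.aestronglyMeasurable,
    Measure.lintegral_bind (Kernel.measurable Q).aemeasurable hg.ennreal_ofReal.aemeasurable,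
    integral_eq_lintegral_of_nonneg_ae
      (Filter.Eventually.of_forall fun x => (aux_A_bd Q hg hb x).1)
      (aux_A_meas Q hg hb).aestronglyMeasurable]
  congr 1
  refine lintegral_congr fun x => ?_
  exact (ofReal_integral_eq_lintegral_ofReal (aux_bddInt _ hg hb)
    (Filter.Eventually.of_forall fun y => (hb y).1)).symm

lemma aux_iterDist_integral (Q : Kernel X X) [IsMarkovKernel Q] (ν : Measure X)
    [IsProbabilityMeasure ν] (t : ℕ) :
    ∀ (g : X → ℝ), Measurable g → (∀ x, 0 ≤ g x ∧ g x ≤ 1) →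
    ∫ y, g y ∂(iterDist Q ν t)
      = ∫ x, ((fun (h : X → ℝ) z => ∫ y, h y ∂(Q z))^[t] g) x ∂ν := by
  induction t with
  | zero => intro g hg hb; rfl
  | succ n ih =>
    intro g hg hb
    haveI := aux_iterDist_prob Q ν n
    have h1 : ∫ y, g y ∂(iterDist Q ν (n+1)) = ∫ x, (∫ y, g y ∂(Q x)) ∂(iterDist Q ν n) :=
      aux_integral_bind Q _ hg hb
    rw [h1, ih _ (aux_A_meas Q hg hb) (aux_A_bd Q hg hb), ← Function.iterate_succ_apply]

lemma coupling_facts {V : X → ℝ} (hVmeas : Measurable V)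
    {u : X → ℝ} (hum : Measurable u) (hub : ∀ z, 0 ≤ u z ∧ u z ≤ 1)
    (ν ν' : Measure X) [IsProbabilityMeasure ν] [IsProbabilityMeasure ν']
    (hVν : Integrable V ν) (hVν' : Integrable V ν')
    (π : Measure (X × X)) (hπ : IsCoupling π ν ν') :
    IsProbabilityMeasure π ∧
    Integrable (fun p : X × X => u p.2 - u p.1) π ∧
    Integrable (fun p : X × X => (V p.1 + V p.2) / 2) π ∧
    (∫ p, (u p.2 - u p.1) ∂π = (∫ y, u y ∂ν') - ∫ y, u y ∂ν) ∧
    (∫ p, ((V p.1 + V p.2) / 2) ∂π = ((∫ y, V y ∂ν) + ∫ y, V y ∂ν') / 2) := by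
  have hprob : IsProbabilityMeasure π := by
    constructor
    have h1 : π.map Prod.fst Set.univ = 1 := by rw [hπ.1]; exact measure_univ
    rwa [Measure.map_apply measurable_fst MeasurableSet.univ, Set.preimage_univ] at h1
  haveI := hprob
  have hu2 : Integrable (fun p : X × X => u p.2) π := by
    have h : Integrable u (π.map Prod.snd) := by
      rw [hπ.2]; exact aux_bddInt _ hum hub
    exact (integrable_map_measure (by rw [hπ.2]; exact hum.aestronglyMeasurable)
      measurable_snd.aemeasurable).mp h
  have hu1 : Integrable (fun p : X × X => u p.1) π := by
    have h : Integrable u (π.map Prod.fst) := by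
      rw [hπ.1]; exact aux_bddInt _ hum hub
    exact (integrable_map_measure (by rw [hπ.1]; exact hum.aestronglyMeasurable)
      measurable_fst.aemeasurable).mp h
  have hV1i : Integrable (fun p : X × X => V p.1) π := by
    have h : Integrable V (π.map Prod.fst) := by rw [hπ.1]; exact hVν
    exact (integrable_map_measure (by rw [hπ.1]; exact hVmeas.aestronglyMeasurable)
      measurable_fst.aemeasurable).mp h
  have hV2i : Integrable (fun p : X × X => V p.2) π := by
    have h : Integrable V (π.map Prod.snd) := by rw [hπ.2]; exact hVν'
    exact (integrable_map_measure (by rw [hπ.2]; exact hVmeas.aestronglyMeasurable)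
      measurable_snd.aemeasurable).mp h
  have hiu2 : ∫ p, u p.2 ∂π = ∫ y, u y ∂ν' := by
    rw [← hπ.2, integral_map measurable_snd.aemeasurable
      (by rw [hπ.2]; exact hum.aestronglyMeasurable)]
  have hiu1 : ∫ p, u p.1 ∂π = ∫ y, u y ∂ν := by
    rw [← hπ.1, integral_map measurable_fst.aemeasurable
      (by rw [hπ.1]; exact hum.aestronglyMeasurable)]
  have hiV1 : ∫ p, V p.1 ∂π = ∫ y, V y ∂ν := by
    rw [← hπ.1, integral_map measurable_fst.aemeasurable
      (by rw [hπ.1]; exact hVmeas.aestronglyMeasurable)]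
  have hiV2 : ∫ p, V p.2 ∂π = ∫ y, V y ∂ν' := by
    rw [← hπ.2, integral_map measurable_snd.aemeasurable
      (by rw [hπ.2]; exact hVmeas.aestronglyMeasurable)]
  refine ⟨hprob, hu2.sub hu1, (hV1i.add hV2i).div_const 2, ?_, ?_⟩
  · rw [integral_sub hu2 hu1, hiu2, hiu1]
  · rw [integral_div, integral_add hV1i hV2i, hiV1, hiV2]

end Aux

section KB
variable {X : Type*} [MeasurableSpace X] [PartialOrder X]

set_option maxHeartbeats 2000000 in
lemma key_bound
    (hGm : MeasurableSet {p : X × X | p.2 ≤ p.1})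
    (Q : Kernel X X) [IsMarkovKernel Q]
    (hinc : ∀ h : X → ℝ, Measurable h → Monotone h → (∃ M, ∀ x, |h x| ≤ M) →
      Monotone fun x => ∫ y, h y ∂(Q x))
    (V : X → ℝ) (hVmeas : Measurable V) (hV1 : ∀ x, 1 ≤ V x)
    (lam beta : ℝ) (hlam : 0 ≤ lam) (hbeta : 0 ≤ beta)
    (hQVint : ∀ z, Integrable V (Q z))
    (hQVle : ∀ z, ∫ y, V y ∂(Q z) ≤ lam * V z + beta)
    (d : ℝ) (hd : 1 ≤ d) (ε : ℝ) (hε0 : 0 ≤ ε) (hε1 : ε ≤ 1)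
    (hcoup : ∀ x x', V x ≤ d → V x' ≤ d → ∀ δ : ℝ, 0 < δ →
      ∃ π : Measure (X × X), IsCoupling π (Q x) (Q x') ∧
        ε - δ ≤ (π {p : X × X | p.2 ≤ p.1}).toReal)
    {g : X → ℝ} (hg : Measurable g) (hmono : Monotone g)
    (hb : ∀ x, 0 ≤ g x ∧ g x ≤ 1) :
    ∀ (r k : ℕ) (x x' : X),
      (fun (h : X → ℝ) z => ∫ y, h y ∂(Q z))^[r] g x' -
      (fun (h : X → ℝ) z => ∫ y, h y ∂(Q z))^[r] g x
        ≤ (1 - ε) ^ k + (lam + 2 * beta / d) ^ r * (d ^ k / d) * ((V x + V x') / 2) := by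
  have hd0 : (0:ℝ) < d := lt_of_lt_of_le one_pos hd
  set γ : ℝ := lam + 2 * beta / d with hγ
  have hγ0 : 0 ≤ γ := by positivity
  clear_value γ
  set A : (X → ℝ) → X → ℝ := fun h z => ∫ y, h y ∂(Q z) with hA
  -- properties of iterates
  have hup : ∀ r : ℕ, Measurable (A^[r] g) ∧ Monotone (A^[r] g) ∧
      ∀ z, 0 ≤ A^[r] g z ∧ A^[r] g z ≤ 1 := by
    intro r
    induction r with
    | zero => exact ⟨hg, hmono, hb⟩
    | succ n ih =>
      rw [Function.iterate_succ_apply']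
      exact ⟨aux_A_meas Q ih.1 ih.2.2,
        hinc _ ih.1 ih.2.1 ⟨1, fun z => abs_le.2
          ⟨by linarith [(ih.2.2 z).1], (ih.2.2 z).2⟩⟩,
        aux_A_bd Q ih.1 ih.2.2⟩
  intro r
  induction r with
  | zero =>
    intro k x x'
    simp only [Function.iterate_zero_apply, pow_zero, one_mul]
    have hW1 : 1 ≤ (V x + V x') / 2 := by linarith [hV1 x, hV1 x']
    rcases k with _ | m
    · simp only [pow_zero]
      have h1 : 0 ≤ (d ^ 0 / d) * ((V x + V x') / 2) := by positivity
      simp only [pow_zero] at h1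
      nlinarith [(hb x').2, (hb x).1]
    · have h1 : (1:ℝ) ≤ d ^ (m + 1) / d := by
        rw [pow_succ, mul_div_assoc, div_self (ne_of_gt hd0), mul_one]
        exact one_le_pow₀ hd
      have h2 : (0:ℝ) ≤ (1 - ε) ^ (m + 1) := pow_nonneg (by linarith) _
      nlinarith [(hb x').2, (hb x).1]
  | succ n ih =>
    intro k x x'
    rw [Function.iterate_succ_apply']
    have hu := hup n
    set u : X → ℝ := A^[n] g with hu_def
    have hum : Measurable u := hu.1
    have humono : Monotone u := hu.2.1
    have hub : ∀ z, 0 ≤ u z ∧ u z ≤ 1 := hu.2.2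
    have hW1 : 1 ≤ (V x + V x') / 2 := by linarith [hV1 x, hV1 x']
    show (∫ y, u y ∂(Q x')) - (∫ y, u y ∂(Q x)) ≤ _
    clear_value u
    clear hu_def hu hup hA
    clear A
    rcases k with _ | m
    · -- trivial case k = 0
      simp only [pow_zero]
      have h1 : 0 ≤ γ ^ (n+1) * (1 / d) * ((V x + V x') / 2) := by positivity
      have h2 := (aux_A_bd Q hum hub x').2
      have h3 := (aux_A_bd Q hum hub x).1
      show (∫ y, u y ∂(Q x')) - (∫ y, u y ∂(Q x)) ≤ 1 + γ ^ (n+1) * (1/d) * ((V x + V x')/2)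
      linarith
    · show (∫ y, u y ∂(Q x')) - (∫ y, u y ∂(Q x)) ≤ _
      set W : ℝ := (V x + V x') / 2 with hW
      set a : ℝ := (1 - ε) ^ m with ha
      set b : ℝ := γ ^ n * (d ^ m / d) with hbdef
      have ha0 : 0 ≤ a := by rw [ha]; exact pow_nonneg (by linarith) _
      have ha1 : a ≤ 1 := by rw [ha]; exact pow_le_one₀ (by linarith) (by linarith)
      have hb0 : 0 ≤ b := by rw [hbdef]; positivity
      have hdd : d ^ (m+1) / d = d ^ m := by
        rw [pow_succ]; exact mul_div_cancel_right₀ _ (ne_of_gt hd0)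
      have hbγd : b * (γ * d) = γ ^ (n+1) * (d ^ (m+1) / d) := by
        rw [hdd, hbdef, pow_succ]
        field_simp
      clear_value W a b
      by_cases hC : V x ≤ d ∧ V x' ≤ d
      · -- both in C : use an ε-good coupling
        refine le_of_forall_pos_le_add fun δ hδ => ?_
        obtain ⟨π, hπ, hπG⟩ := hcoup x x' hC.1 hC.2 δ hδ
        obtain ⟨hπprob, hintf, hintW, hIf, hIW⟩ :=
          coupling_facts hVmeas hum hub (Q x) (Q x') (hQVint x) (hQVint x') π hπ
        haveI := hπprob
        rw [show (∫ y, u y ∂(Q x')) - (∫ y, u y ∂(Q x))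
            = ∫ p, (u p.2 - u p.1) ∂π from hIf.symm]
        rw [← integral_add_compl hGm hintf]
        set G : Set (X × X) := {p : X × X | p.2 ≤ p.1} with hGdef
        have h1 : ∫ p in G, (u p.2 - u p.1) ∂π ≤ 0 :=
          setIntegral_nonpos hGm fun p hp => sub_nonpos.2 (humono hp)
        have h2 : ∫ p in Gᶜ, (u p.2 - u p.1) ∂π
            ≤ ∫ p in Gᶜ, (a + b * ((V p.1 + V p.2) / 2)) ∂π := by
          refine setIntegral_mono_on hintf.integrableOn
            (((integrable_const a).add (hintW.const_mul b)).integrableOn) hGm.compl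
            (fun p _ => ?_)
          rw [ha, hbdef]
          exact ih m p.1 p.2
        have h3 : ∫ p in Gᶜ, (a + b * ((V p.1 + V p.2) / 2)) ∂π
            = a * (π Gᶜ).toReal + b * ∫ p in Gᶜ, ((V p.1 + V p.2) / 2) ∂π := by
          rw [integral_add (integrable_const a).integrableOn
            (hintW.const_mul b).integrableOn, setIntegral_const, integral_const_mul,
            smul_eq_mul, measureReal_def]
          ring
        have h4 : (π Gᶜ).toReal ≤ 1 - ε + δ := by
          have hGle : π G ≤ 1 := prob_le_one
          have hcompl : π Gᶜ = 1 - π G := by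
            rw [measure_compl hGm (measure_ne_top π G), measure_univ]
          rw [hcompl, ENNReal.toReal_sub_of_le hGle ENNReal.one_ne_top,
            ENNReal.toReal_one]
          linarith
        have h5 : ∫ p in Gᶜ, ((V p.1 + V p.2) / 2) ∂π
            ≤ ∫ p, ((V p.1 + V p.2) / 2) ∂π :=
          setIntegral_le_integral hintW (Filter.Eventually.of_forall fun p => by
            have := hV1 p.1; have := hV1 p.2
            show (0:ℝ) ≤ (V p.1 + V p.2) / 2
            linarith)
        have h6 : ∫ p, ((V p.1 + V p.2) / 2) ∂π ≤ lam * W + beta := by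
          rw [hIW]
          have hx := hQVle x; have hx' := hQVle x'
          rw [hW]; linarith
        have hWd : W ≤ d := by rw [hW]; have := hC.1; have := hC.2; linarith
        have hW0 : 0 ≤ W := by linarith
        have hWint0 : 0 ≤ ∫ p in Gᶜ, ((V p.1 + V p.2) / 2) ∂π :=
          setIntegral_nonneg hGm.compl fun p _ => by
            have := hV1 p.1; have := hV1 p.2; linarith
        have hπG0 : (0:ℝ) ≤ (π Gᶜ).toReal := ENNReal.toReal_nonneg
        -- assemble
        have key1 : ∫ p in Gᶜ, (u p.2 - u p.1) ∂π
            ≤ a * (1 - ε + δ) + b * (lam * W + beta) := by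
          rw [h3] at h2
          have hb5 : b * ∫ p in Gᶜ, ((V p.1 + V p.2) / 2) ∂π ≤ b * (lam * W + beta) :=
            mul_le_mul_of_nonneg_left (le_trans h5 h6) hb0
          have ha4 : a * (π Gᶜ).toReal ≤ a * (1 - ε + δ) :=
            mul_le_mul_of_nonneg_left h4 ha0
          linarith
        have key2 : a * (1 - ε + δ) + b * (lam * W + beta)
            ≤ (1 - ε) ^ (m+1) + γ ^ (n+1) * (d ^ (m+1) / d) * W + δ := by
          have e1 : a * (1 - ε + δ) = (1 - ε) ^ (m+1) + a * δ := by
            rw [ha, pow_succ]; ring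
          have e2 : a * δ ≤ δ := by nlinarith
          have e3 : lam * W + beta ≤ γ * d := by
            have hγd : γ * d = lam * d + 2 * beta := by
              rw [hγ]; field_simp
            have : lam * W ≤ lam * d := mul_le_mul_of_nonneg_left hWd hlam
            linarith
          have e4 : b * (lam * W + beta) ≤ b * (γ * d) :=
            mul_le_mul_of_nonneg_left e3 hb0
          have e5 : γ ^ (n+1) * (d ^ (m+1) / d) ≤ γ ^ (n+1) * (d ^ (m+1) / d) * W :=
            le_mul_of_one_le_right (by positivity) hW1
          linarith [hbγd]
        linarith
      · -- outside C × C : product coupling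
        have hπ : IsCoupling ((Q x).prod (Q x')) (Q x) (Q x') := by
          constructor
          · rw [Measure.map_fst_prod]; simp
          · rw [Measure.map_snd_prod]; simp
        obtain ⟨hπprob, hintf, hintW, hIf, hIW⟩ :=
          coupling_facts hVmeas hum hub (Q x) (Q x') (hQVint x) (hQVint x') _ hπ
        haveI := hπprob
        rw [show (∫ y, u y ∂(Q x')) - (∫ y, u y ∂(Q x))
            = ∫ p, (u p.2 - u p.1) ∂((Q x).prod (Q x')) from hIf.symm]
        set a' : ℝ := (1 - ε) ^ (m+1) with ha'
        set b' : ℝ := γ ^ n * (d ^ (m+1) / d) with hb'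
        have hb'0 : 0 ≤ b' := by rw [hb']; positivity
        have hbγ' : b' * γ = γ ^ (n+1) * (d ^ (m+1) / d) := by
          rw [hb', pow_succ]; ring
        clear_value a' b'
        have h2 : ∫ p, (u p.2 - u p.1) ∂((Q x).prod (Q x'))
            ≤ ∫ p, (a' + b' * ((V p.1 + V p.2) / 2)) ∂((Q x).prod (Q x')) := by
          refine integral_mono hintf ((integrable_const a').add (hintW.const_mul b'))
            (fun p => ?_)
          show u p.2 - u p.1 ≤ a' + b' * ((V p.1 + V p.2) / 2)
          rw [ha', hb']
          exact ih (m+1) p.1 p.2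
        have h3 : ∫ p, (a' + b' * ((V p.1 + V p.2) / 2)) ∂((Q x).prod (Q x'))
            = a' + b' * ∫ p, ((V p.1 + V p.2) / 2) ∂((Q x).prod (Q x')) := by
          rw [integral_add (integrable_const a') (hintW.const_mul b'),
            integral_const, integral_const_mul, probReal_univ,
            one_smul]
        have h6 : ∫ p, ((V p.1 + V p.2) / 2) ∂((Q x).prod (Q x')) ≤ lam * W + beta := by
          rw [hIW]
          have hx := hQVle x; have hx' := hQVle x'
          rw [hW]; linarith
        have h7 : lam * W + beta ≤ γ * W := by
          have hdW : d ≤ 2 * W := by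
            rcases not_and_or.mp hC with h | h <;> push_neg at h <;>
              [have := hV1 x'; have := hV1 x] <;> rw [hW] <;> linarith
          have he : γ * W = lam * W + (2 * beta / d) * W := by rw [hγ]; ring
          rw [he]
          have : beta ≤ (2 * beta / d) * W := by
            rw [div_mul_eq_mul_div, le_div_iff₀ hd0]
            nlinarith
          linarith
        have hWπ0 : 0 ≤ ∫ p, ((V p.1 + V p.2) / 2) ∂((Q x).prod (Q x')) :=
          integral_nonneg fun p => by
            have := hV1 p.1; have := hV1 p.2
            show (0:ℝ) ≤ (V p.1 + V p.2) / 2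
            linarith
        have key : a' + b' * ∫ p, ((V p.1 + V p.2) / 2) ∂((Q x).prod (Q x'))
            ≤ a' + γ ^ (n+1) * (d ^ (m+1) / d) * W := by
          have e1 : b' * ∫ p, ((V p.1 + V p.2) / 2) ∂((Q x).prod (Q x'))
              ≤ b' * (γ * W) := mul_le_mul_of_nonneg_left (le_trans h6 h7) hb'0
          have e2 : b' * (γ * W) = γ ^ (n+1) * (d ^ (m+1) / d) * W := by
            rw [← hbγ']; ring
          linarith
        linarith
end KB

section Main

variable {X : Type*} [MeasurableSpace X]

lemma aux_int01 (ν : Measure X) [IsProbabilityMeasure ν] {g : X → ℝ}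
    (hg : Measurable g) (hb : ∀ x, 0 ≤ g x ∧ g x ≤ 1) :
    0 ≤ ∫ y, g y ∂ν ∧ ∫ y, g y ∂ν ≤ 1 := by
  constructor
  · exact integral_nonneg fun y => (hb y).1
  · calc ∫ y, g y ∂ν ≤ ∫ _, (1:ℝ) ∂ν :=
          integral_mono (aux_bddInt _ hg hb) (integrable_const 1) fun y => (hb y).2
    _ = 1 := by simp

lemma aux_iter_full (Q : Kernel X X) [IsMarkovKernel Q] [PartialOrder X]
    (hinc : ∀ h : X → ℝ, Measurable h → Monotone h → (∃ M, ∀ x, |h x| ≤ M) →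
      Monotone fun x => ∫ y, h y ∂(Q x))
    {g : X → ℝ} (hg : Measurable g) (hmono : Monotone g)
    (hb : ∀ x, 0 ≤ g x ∧ g x ≤ 1) (r : ℕ) :
    Measurable ((fun (h : X → ℝ) z => ∫ y, h y ∂(Q z))^[r] g) ∧
    Monotone ((fun (h : X → ℝ) z => ∫ y, h y ∂(Q z))^[r] g) ∧
    ∀ z, 0 ≤ (fun (h : X → ℝ) z => ∫ y, h y ∂(Q z))^[r] g z ∧
      (fun (h : X → ℝ) z => ∫ y, h y ∂(Q z))^[r] g z ≤ 1 := by
  induction r with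
  | zero => exact ⟨hg, hmono, hb⟩
  | succ n ih =>
    rw [Function.iterate_succ_apply']
    exact ⟨aux_A_meas Q ih.1 ih.2.2,
      hinc _ ih.1 ih.2.1 ⟨1, fun z => abs_le.2
        ⟨by linarith [(ih.2.2 z).1], (ih.2.2 z).2⟩⟩,
      aux_A_bd Q ih.1 ih.2.2⟩

end Main

set_option maxHeartbeats 2000000 in
theorem kolmogorov_convergence_rate {X : Type*} [MeasurableSpace X]
    [TopologicalSpace X] [PolishSpace X] [BorelSpace X] [PartialOrder X]
    (hG : IsClosed {p : X × X | p.1 ≤ p.2})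
    (Q : Kernel X X) [IsMarkovKernel Q]
    (hinc : ∀ h : X → ℝ, Measurable h → Monotone h → (∃ M, ∀ x, |h x| ≤ M) →
      Monotone fun x => ∫ y, h y ∂(Q x))
    (V : X → ℝ) (hVmeas : Measurable V) (hV1 : ∀ x, 1 ≤ V x)
    (lam beta : ℝ) (hlam : 0 ≤ lam) (hbeta : 0 ≤ beta)
    (hdrift : ∀ x, ∫⁻ y, ENNReal.ofReal (V y) ∂(Q x) ≤ ENNReal.ofReal (lam * V x + beta))
    (d : ℝ) (hd : 1 ≤ d)
    (ε : ℝ)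
    (hε : ε = sInf {r : ℝ | ∃ x ∈ {z : X | V z ≤ d}, ∃ x' ∈ {z : X | V z ≤ d},
      r = (alphaRev (Q x) (Q x')).toReal})
    (μ μ' : Measure X) [IsProbabilityMeasure μ] [IsProbabilityMeasure μ']
    (t j : ℕ) (hj : j ≤ t) :
    ENNReal.ofReal (kolDist (iterDist Q μ t) (iterDist Q μ' t))
      ≤ ENNReal.ofReal ((1 - ε) ^ j)
        + ENNReal.ofReal ((lam + 2 * beta / d) ^ t * d ^ (j - 1)) *
          ((∫⁻ x, ENNReal.ofReal (V x) ∂μ + ∫⁻ x, ENNReal.ofReal (V x) ∂μ') / 2) := by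
  have hd0 : (0:ℝ) < d := lt_of_lt_of_le one_pos hd
  have hVnn : ∀ z : X, (0:ℝ) ≤ V z := fun z => le_trans zero_le_one (hV1 z)
  -- X is nonempty
  have hXne : Nonempty X := by
    by_contra hne
    rw [not_nonempty_iff] at hne
    have h1 : μ Set.univ = 1 := measure_univ
    rw [Set.univ_eq_empty_iff.mpr hne, measure_empty] at h1
    exact zero_ne_one h1
  obtain ⟨x0⟩ := hXne
  -- γ is positive
  have hγpos : 0 < lam + 2 * beta / d := by
    rcases lt_or_ge 0 (lam + 2 * beta / d) with h | h
    · exact h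
    · exfalso
      have hbd : (0:ℝ) ≤ 2 * beta / d := by positivity
      have hlam0 : lam = 0 := by linarith
      have hbd0 : 2 * beta / d = 0 := by linarith
      have hbeta0 : beta = 0 := by
        rcases div_eq_zero_iff.mp hbd0 with h2 | h2
        · linarith
        · exact absurd h2 (ne_of_gt hd0)
      have h1 : (1:ENNReal) ≤ ∫⁻ y, ENNReal.ofReal (V y) ∂(Q x0) := by
        have hone : ∫⁻ (_ : X), (1:ENNReal) ∂(Q x0) = 1 := by simp
        rw [← hone]
        exact lintegral_mono fun y => ENNReal.one_le_ofReal.mpr (hV1 y)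
      have h2 := hdrift x0
      rw [hlam0, hbeta0] at h2
      norm_num at h2
      rw [h2] at h1
      norm_num at h1
  -- ε facts
  have hSnn : ∀ r ∈ {r : ℝ | ∃ x ∈ {z : X | V z ≤ d}, ∃ x' ∈ {z : X | V z ≤ d},
      r = (alphaRev (Q x) (Q x')).toReal}, 0 ≤ r := by
    rintro r ⟨x, hx, x', hx', rfl⟩
    exact ENNReal.toReal_nonneg
  have hbdd : BddBelow {r : ℝ | ∃ x ∈ {z : X | V z ≤ d}, ∃ x' ∈ {z : X | V z ≤ d},
      r = (alphaRev (Q x) (Q x')).toReal} := ⟨0, hSnn⟩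
  have hε0 : 0 ≤ ε := hε ▸ Real.sInf_nonneg hSnn
  have halphale : ∀ x x' : X, alphaRev (Q x) (Q x') ≤ 1 := by
    intro x x'
    refine iSup₂_le fun ρ hρ => ?_
    have hρc : IsCoupling ρ (Q x) (Q x') := hρ
    have hρ1 : ρ Set.univ = 1 := by
      have h1 : ρ.map Prod.fst Set.univ = 1 := by rw [hρc.1]; exact measure_univ
      rwa [Measure.map_apply measurable_fst MeasurableSet.univ, Set.preimage_univ] at h1
    calc ρ {p : X × X | p.2 ≤ p.1} ≤ ρ Set.univ := measure_mono (Set.subset_univ _)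
    _ = 1 := hρ1
  have hε1 : ε ≤ 1 := by
    rcases Set.eq_empty_or_nonempty {r : ℝ | ∃ x ∈ {z : X | V z ≤ d},
        ∃ x' ∈ {z : X | V z ≤ d}, r = (alphaRev (Q x) (Q x')).toReal} with hSe | ⟨r, hr⟩
    · rw [hε, hSe, Real.sInf_empty]; exact zero_le_one
    · have h1 : ε ≤ r := hε ▸ csInf_le hbdd hr
      obtain ⟨x, hx, x', hx', rfl⟩ := hr
      have h2 : (alphaRev (Q x) (Q x')).toReal ≤ 1 := by
        have h3 := ENNReal.toReal_mono ENNReal.one_ne_top (halphale x x')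
        simpa using h3
      linarith
  have hprodcoup : ∀ x x' : X, IsCoupling ((Q x).prod (Q x')) (Q x) (Q x') := by
    intro x x'
    constructor
    · rw [Measure.map_fst_prod]; simp
    · rw [Measure.map_snd_prod]; simp
  have hcoup : ∀ x x', V x ≤ d → V x' ≤ d → ∀ δ : ℝ, 0 < δ →
      ∃ π : Measure (X × X), IsCoupling π (Q x) (Q x') ∧
        ε - δ ≤ (π {p : X × X | p.2 ≤ p.1}).toReal := by
    intro x x' hx hx' δ hδ
    rcases le_or_gt ε δ with h | h
    · exact ⟨(Q x).prod (Q x'), hprodcoup x x',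
        le_trans (by linarith) ENNReal.toReal_nonneg⟩
    · have hεα : ε ≤ (alphaRev (Q x) (Q x')).toReal :=
        hε ▸ csInf_le hbdd ⟨x, hx, x', hx', rfl⟩
      have hαtop : alphaRev (Q x) (Q x') ≠ ⊤ :=
        (lt_of_le_of_lt (halphale x x') ENNReal.one_lt_top).ne
      have hlt : ENNReal.ofReal (ε - δ) < alphaRev (Q x) (Q x') := by
        calc ENNReal.ofReal (ε - δ) < ENNReal.ofReal ε :=
              (ENNReal.ofReal_lt_ofReal_iff (by linarith)).mpr (by linarith)
        _ ≤ _ := by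
              rw [← ENNReal.ofReal_toReal hαtop]
              exact ENNReal.ofReal_le_ofReal hεα
      rw [alphaRev, lt_iSup_iff] at hlt
      obtain ⟨π, hπlt⟩ := hlt
      rw [lt_iSup_iff] at hπlt
      obtain ⟨hπS, hπlt⟩ := hπlt
      have hπc : IsCoupling π (Q x) (Q x') := hπS
      refine ⟨π, hπc, ?_⟩
      have hπ1 : π Set.univ = 1 := by
        have h1 : π.map Prod.fst Set.univ = 1 := by rw [hπc.1]; exact measure_univ
        rwa [Measure.map_apply measurable_fst MeasurableSet.univ,
          Set.preimage_univ] at h1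
      have hπne : π {p : X × X | p.2 ≤ p.1} ≠ ⊤ := by
        refine ne_top_of_le_ne_top ENNReal.one_ne_top ?_
        rw [← hπ1]
        exact measure_mono (Set.subset_univ _)
      have h2 := ENNReal.toReal_mono hπne hπlt.le
      rwa [ENNReal.toReal_ofReal (by linarith)] at h2
  -- drift in Bochner form
  have hQVint : ∀ z, Integrable V (Q z) := fun z =>
    ⟨hVmeas.aestronglyMeasurable,
      (hasFiniteIntegral_iff_ofReal (Filter.Eventually.of_forall hVnn)).mpr
        (lt_of_le_of_lt (hdrift z) ENNReal.ofReal_lt_top)⟩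
  have hQVle : ∀ z, ∫ y, V y ∂(Q z) ≤ lam * V z + beta := by
    intro z
    have h1 := ofReal_integral_eq_lintegral_ofReal (hQVint z)
      (Filter.Eventually.of_forall hVnn)
    have h2 : ENNReal.ofReal (∫ y, V y ∂(Q z)) ≤ ENNReal.ofReal (lam * V z + beta) := by
      rw [h1]; exact hdrift z
    exact (ENNReal.ofReal_le_ofReal_iff (by nlinarith [hV1 z])).mp h2
  -- the set G is measurable
  have hGm : MeasurableSet {p : X × X | p.2 ≤ p.1} := by
    have hcl : IsClosed {p : X × X | p.2 ≤ p.1} :=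
      hG.preimage (continuous_swap : Continuous (Prod.swap : X × X → X × X))
    exact hcl.measurableSet
  haveI hP1 : IsProbabilityMeasure (iterDist Q μ t) := aux_iterDist_prob Q μ t
  haveI hP2 : IsProbabilityMeasure (iterDist Q μ' t) := aux_iterDist_prob Q μ' t
  -- kolDist is at most 1
  have hkol1 : kolDist (iterDist Q μ t) (iterDist Q μ' t) ≤ 1 := by
    apply Real.sSup_le _ zero_le_one
    rintro r ⟨h, hm, hmono, hb, rfl⟩
    have i1 := aux_int01 (iterDist Q μ t) hm hb
    have i2 := aux_int01 (iterDist Q μ' t) hm hb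
    exact abs_le.mpr ⟨by linarith [i1.1, i2.2], by linarith [i1.2, i2.1]⟩
  rcases j with _ | j'
  · -- j = 0 : trivial
    calc ENNReal.ofReal (kolDist (iterDist Q μ t) (iterDist Q μ' t))
        ≤ ENNReal.ofReal ((1 - ε) ^ 0) := by
          rw [pow_zero]; exact ENNReal.ofReal_le_ofReal hkol1
    _ ≤ _ := le_self_add
  · by_cases hfin : (∫⁻ x, ENNReal.ofReal (V x) ∂μ) = ⊤ ∨
        (∫⁻ x, ENNReal.ofReal (V x) ∂μ') = ⊤
    · -- the right-hand side is infinite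
      have hc0 : ENNReal.ofReal ((lam + 2 * beta / d) ^ t * d ^ (j' + 1 - 1)) ≠ 0 := by
        rw [ne_eq, ENNReal.ofReal_eq_zero, not_le]
        positivity
      have hH : ((∫⁻ x, ENNReal.ofReal (V x) ∂μ) + ∫⁻ x, ENNReal.ofReal (V x) ∂μ') / 2
          = ⊤ := by
        have htd : (⊤:ENNReal) / 2 = ⊤ := ENNReal.top_div_of_lt_top (by norm_num)
        rcases hfin with h | h <;> rw [h] <;> simp [htd]
      rw [hH, ENNReal.mul_top hc0]
      simp
    · push_neg at hfin
      have hVμ : Integrable V μ := ⟨hVmeas.aestronglyMeasurable,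
        (hasFiniteIntegral_iff_ofReal (Filter.Eventually.of_forall hVnn)).mpr
          (lt_top_iff_ne_top.mpr hfin.1)⟩
      have hVμ' : Integrable V μ' := ⟨hVmeas.aestronglyMeasurable,
        (hasFiniteIntegral_iff_ofReal (Filter.Eventually.of_forall hVnn)).mpr
          (lt_top_iff_ne_top.mpr hfin.2)⟩
      have hIV0 : 0 ≤ ∫ z, V z ∂μ := integral_nonneg hVnn
      have hIV0' : 0 ≤ ∫ z, V z ∂μ' := integral_nonneg hVnn
      have hdd : d ^ (j' + 1) / d = d ^ j' := by
        rw [pow_succ]; exact mul_div_cancel_right₀ _ (ne_of_gt hd0)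
      -- main real-valued bound
      have hmain : kolDist (iterDist Q μ t) (iterDist Q μ' t)
          ≤ (1 - ε) ^ (j' + 1) + (lam + 2 * beta / d) ^ t * d ^ j' *
            (((∫ z, V z ∂μ) + ∫ z, V z ∂μ') / 2) := by
        apply Real.sSup_le
        · rintro r ⟨h, hm, hmono, hb, rfl⟩
          rw [aux_iterDist_integral Q μ t h hm hb, aux_iterDist_integral Q μ' t h hm hb]
          obtain ⟨hum, humono, hub⟩ := aux_iter_full Q hinc hm hmono hb t
          set u : X → ℝ := (fun (h : X → ℝ) z => ∫ y, h y ∂(Q z))^[t] h with hu_def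
          have hkey := key_bound hGm Q hinc V hVmeas hV1 lam beta hlam hbeta
            hQVint hQVle d hd ε hε0 hε1 hcoup hm hmono hb t (j' + 1)
          rw [← hu_def] at hkey
          clear_value u
          obtain ⟨hPprob, hintf, hintW, hIf, hIW⟩ :=
            coupling_facts hVmeas hum hub μ μ' hVμ hVμ' (μ.prod μ')
              ⟨by rw [Measure.map_fst_prod]; simp, by rw [Measure.map_snd_prod]; simp⟩
          haveI := hPprob
          set c : ℝ := (lam + 2 * beta / d) ^ t * d ^ j' with hc
          have hc0 : 0 ≤ c := by rw [hc]; positivity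
          have hkey' : ∀ p : X × X, u p.2 - u p.1
              ≤ (1 - ε) ^ (j' + 1) + c * ((V p.1 + V p.2) / 2) := by
            intro p
            have h1 := hkey p.1 p.2
            rw [hdd] at h1
            rw [hc]
            exact h1
          have hkey'' : ∀ p : X × X, u p.1 - u p.2
              ≤ (1 - ε) ^ (j' + 1) + c * ((V p.1 + V p.2) / 2) := by
            intro p
            have h1 := hkey p.2 p.1
            rw [hdd] at h1
            rw [hc]
            have he : (V p.2 + V p.1) / 2 = (V p.1 + V p.2) / 2 := by ring
            rw [he] at h1
            exact h1
          clear_value c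
          have hbint : Integrable (fun p : X × X =>
              (1 - ε) ^ (j' + 1) + c * ((V p.1 + V p.2) / 2)) (μ.prod μ') :=
            (integrable_const _).add (hintW.const_mul c)
          have habs : |∫ y, u y ∂μ - ∫ y, u y ∂μ'|
              ≤ ∫ p, ((1 - ε) ^ (j' + 1) + c * ((V p.1 + V p.2) / 2)) ∂(μ.prod μ') := by
            rw [abs_sub_comm, ← hIf]
            refine abs_le.mpr ⟨?_, ?_⟩
            · rw [← integral_neg]
              refine integral_mono hbint.neg hintf fun p => ?_
              have := hkey'' p
              show -((1 - ε) ^ (j' + 1) + c * ((V p.1 + V p.2) / 2)) ≤ u p.2 - u p.1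
              linarith
            · exact integral_mono hintf hbint fun p => hkey' p
          have heval : ∫ p, ((1 - ε) ^ (j' + 1) + c * ((V p.1 + V p.2) / 2)) ∂(μ.prod μ')
              = (1 - ε) ^ (j' + 1) + c * (((∫ z, V z ∂μ) + ∫ z, V z ∂μ') / 2) := by
            rw [integral_add (integrable_const _) (hintW.const_mul c), integral_const,
              probReal_univ, one_smul, integral_const_mul, hIW]
          rw [heval] at habs
          exact habs
        · have h1 : (0:ℝ) ≤ (1 - ε) ^ (j' + 1) := pow_nonneg (by linarith) _
          have h2 : (0:ℝ) ≤ (lam + 2 * beta / d) ^ t * d ^ j' *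
              (((∫ z, V z ∂μ) + ∫ z, V z ∂μ') / 2) := by
            apply mul_nonneg (by positivity)
            linarith
          linarith
      -- convert to ENNReal
      have hl1 : ∫⁻ x, ENNReal.ofReal (V x) ∂μ = ENNReal.ofReal (∫ z, V z ∂μ) :=
        (ofReal_integral_eq_lintegral_ofReal hVμ (Filter.Eventually.of_forall hVnn)).symm
      have hl2 : ∫⁻ x, ENNReal.ofReal (V x) ∂μ' = ENNReal.ofReal (∫ z, V z ∂μ') :=
        (ofReal_integral_eq_lintegral_ofReal hVμ' (Filter.Eventually.of_forall hVnn)).symm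
      rw [hl1, hl2, Nat.add_sub_cancel,
        ← ENNReal.ofReal_add hIV0 hIV0',
        show ((2:ENNReal) = ENNReal.ofReal 2) by norm_num,
        ← ENNReal.ofReal_div_of_pos (by norm_num : (0:ℝ) < 2),
        ← ENNReal.ofReal_mul (by positivity),
        ← ENNReal.ofReal_add (pow_nonneg (by linarith) _) (by
          apply mul_nonneg (by positivity)
          linarith)]
      exact ENNReal.ofReal_le_ofReal hmain
end
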